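/- arXiv:2003.12276 — 3 statements merged into one kernel-verified Lean document; each statement's English description precedes it below -/
import Mathlib

section
/- Let Ω = {1,...,n}, let μ be a capacity on Ω, and define the Choquet integral of f : Ω → [0,∞) by C(f;μ) = ∫_0^∞ μ({i ∈ Ω : f(i) ≥ t}) dt. If f, g : Ω → [0,∞) are comonotonic, i.e., (f(i) − f(j))·(g(i) − g(j)) ≥ 0 for all i, j ∈ Ω, and a, b ≥ 0 are real numbers, then C(a·f + b·g; μ) = a·C(f;μ) + b·C(g;μ). -/
open MeasureTheory

/-- The Choquet integral of `f : Ω → [0,∞)` with respect to a capacity `μ`: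
`C(f;μ) = ∫_0^∞ μ({i : f i ≥ t}) dt`. -/
noncomputable def choquetIntegral {n : ℕ} (μ : Finset (Fin n) → ℝ) (f : Fin n → ℝ) : ℝ :=
  ∫ t in Set.Ioi (0 : ℝ), μ (Finset.univ.filter fun i => t ≤ f i)

/-! Sort the indices by `f + g`. Comonotonicity forces `f`, `g`, and hence `a * f + b * g`, to be
monotone along this one permutation `σ`. For `h` monotone along `σ` every level set `{i | t ≤ h i}`
is a tail `{σ k, σ (k + 1), …}`, so the integrand is a step function and the Choquet integral is
`∑ₖ h (σ k) * (μ Tₖ - μ Tₖ₊₁)`, which is linear in `h`. -/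

open Finset Set

theorem Fin.lt_card_filter_iff_of_antitone {n : ℕ} {P : Fin n → Prop} [DecidablePred P]
    (hP : ∀ ⦃j k⦄, j ≤ k → P k → P j) (k : Fin n) : P k ↔ (k : ℕ) < #{j | P j} := by
  constructor
  · intro hk
    have hsub : Finset.Iic k ⊆ ({j | P j} : Finset (Fin n)) := fun j hj => by
      simpa using hP (Finset.mem_Iic.1 hj) hk
    have := Finset.card_le_card hsub
    rw [Fin.card_Iic] at this
    omega
  · intro hlt
    by_contra hk
    have hsub : ({j | P j} : Finset (Fin n)) ⊆ Finset.Iio k := fun j hj =>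
      Finset.mem_Iio.2 (lt_of_not_ge fun hkj => hk (hP hkj (Finset.mem_filter.1 hj).2))
    have := Finset.card_le_card hsub
    rw [Fin.card_Iio] at this
    omega

theorem Finset.sum_range_ite_le_sub {M : Type*} [AddCommGroup M] (F : ℕ → M) {m n : ℕ}
    (hmn : m ≤ n) :
    ∑ k ∈ range n, (if m ≤ k then F k - F (k + 1) else 0) = F m - F n := by
  have hIco : (range n).filter (fun k => m ≤ k) = Ico m n := by
    ext k; simp only [Finset.mem_filter, Finset.mem_range, Finset.mem_Ico]; omega
  rw [← sum_filter, hIco, ← neg_sub, ← sum_Ico_sub (f := F) hmn, ← sum_neg_distrib]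
  simp only [neg_sub]

theorem Monotone.of_add_of_comonotone {ι R : Type*} [Preorder ι] [Ring R] [LinearOrder R]
    [IsStrictOrderedRing R] {f g : ι → R} (hfg : Monotone (f + g))
    (hcomon : ∀ i j, 0 ≤ (f i - f j) * (g i - g j)) : Monotone f := by
  intro i j hij
  by_contra! hlt
  have hprod := hcomon i j
  have hsum : f i + g i ≤ f j + g j := hfg hij
  have hgij : g j ≤ g i := sub_nonneg.1 ((mul_nonneg_iff_of_pos_left (sub_pos.2 hlt)).1 hprod)
  exact hsum.not_gt (add_lt_add_of_lt_of_le hlt hgij)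

theorem integrableOn_Ioi_indicator_Iic (x c : ℝ) :
    IntegrableOn ((Iic x).indicator fun _ => c) (Ioi 0) := by
  rw [IntegrableOn, integrable_indicator_iff measurableSet_Iic, IntegrableOn,
    Measure.restrict_restrict measurableSet_Iic, Set.inter_comm, Set.Ioi_inter_Iic]
  exact integrableOn_const measure_Ioc_lt_top.ne

theorem setIntegral_Ioi_indicator_Iic {x : ℝ} (hx : 0 ≤ x) (c : ℝ) :
    ∫ t in Ioi 0, (Iic x).indicator (fun _ => c) t = x * c := by
  rw [integral_indicator measurableSet_Iic, Measure.restrict_restrict measurableSet_Iic,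
    Set.inter_comm, Set.Ioi_inter_Iic, setIntegral_const, Real.volume_real_Ioc_of_le hx,
    sub_zero, smul_eq_mul]

def rankTail {n : ℕ} (σ : Equiv.Perm (Fin n)) (k : ℕ) : Finset (Fin n) :=
  {i | k ≤ (σ.symm i : ℕ)}

theorem rankTail_eq_empty {n : ℕ} (σ : Equiv.Perm (Fin n)) : rankTail σ n = ∅ := by
  ext i; simp [rankTail]

section
variable {n : ℕ} {σ : Equiv.Perm (Fin n)} {h : Fin n → ℝ}

theorem le_iff_card_filter_lt_le (hmono : Monotone (h ∘ σ)) (t : ℝ) (k : Fin n) :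
    t ≤ h (σ k) ↔ #{j | h (σ j) < t} ≤ (k : ℕ) := by
  rw [← not_lt, ← not_lt, ← Fin.lt_card_filter_iff_of_antitone (P := fun j => h (σ j) < t)
    fun j k hjk hk => (hmono hjk).trans_lt hk]

theorem filter_le_eq_rankTail (hmono : Monotone (h ∘ σ)) (t : ℝ) :
    ({i | t ≤ h i} : Finset (Fin n)) = rankTail σ #{j | h (σ j) < t} := by
  ext i
  simpa [rankTail] using le_iff_card_filter_lt_le hmono t (σ.symm i)

theorem apply_filter_le_eq_sum_indicator (μ : Finset (Fin n) → ℝ) (hμ : μ ∅ = 0)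
    (hmono : Monotone (h ∘ σ)) (t : ℝ) :
    μ {i | t ≤ h i} = ∑ k : Fin n,
      (Iic (h (σ k))).indicator (fun _ => μ (rankTail σ k) - μ (rankTail σ (k + 1))) t := by
  have hm : #{j | h (σ j) < t} ≤ n := (card_filter_le _ _).trans_eq (card_fin n)
  simp only [Set.indicator_apply, Set.mem_Iic, le_iff_card_filter_lt_le hmono]
  rw [filter_le_eq_rankTail hmono, Fin.sum_univ_eq_sum_range
    (fun k => if _ ≤ k then μ (rankTail σ k) - μ (rankTail σ (k + 1)) else 0),
    sum_range_ite_le_sub _ hm, rankTail_eq_empty, hμ, sub_zero]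

theorem choquetIntegral_eq_sum_of_monotone (μ : Finset (Fin n) → ℝ) (hμ : μ ∅ = 0)
    (hh : ∀ i, 0 ≤ h i) (hmono : Monotone (h ∘ σ)) :
    choquetIntegral μ h = ∑ k : Fin n, h (σ k) * (μ (rankTail σ k) - μ (rankTail σ (k + 1))) := by
  simp only [choquetIntegral, apply_filter_le_eq_sum_indicator μ hμ hmono]
  rw [integral_finsetSum _ fun k _ => integrableOn_Ioi_indicator_Iic _ _]
  exact sum_congr rfl fun k _ => setIntegral_Ioi_indicator_Iic (hh _) _

end

theorem choquetIntegral_comonotone_additive_general {n : ℕ}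
    (μ : Finset (Fin n) → ℝ) (hμ_empty : μ ∅ = 0)
    (f g : Fin n → ℝ) (hf : ∀ i, 0 ≤ f i) (hg : ∀ i, 0 ≤ g i)
    (hcomon : ∀ i j, 0 ≤ (f i - f j) * (g i - g j))
    (a b : ℝ) (ha : 0 ≤ a) (hb : 0 ≤ b) :
    choquetIntegral μ (fun i => a * f i + b * g i) =
      a * choquetIntegral μ f + b * choquetIntegral μ g := by
  set σ := Tuple.sort (f + g)
  have hsum : Monotone (f ∘ σ + g ∘ σ) := Tuple.monotone_sort (f + g)
  have hfσ : Monotone (f ∘ σ) := hsum.of_add_of_comonotone fun i j => hcomon _ _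
  have hgσ : Monotone (g ∘ σ) := (add_comm (f ∘ σ) _ ▸ hsum).of_add_of_comonotone
    fun i j => mul_comm (f (σ i) - f (σ j)) _ ▸ hcomon _ _
  have hcomb : Monotone ((fun i => a * f i + b * g i) ∘ σ) :=
    (hfσ.const_mul ha).add (hgσ.const_mul hb)
  have hcomb_nonneg : ∀ i, 0 ≤ a * f i + b * g i := fun i =>
    add_nonneg (mul_nonneg ha (hf i)) (mul_nonneg hb (hg i))
  rw [choquetIntegral_eq_sum_of_monotone μ hμ_empty hcomb_nonneg hcomb,
    choquetIntegral_eq_sum_of_monotone μ hμ_empty hf hfσ,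
    choquetIntegral_eq_sum_of_monotone μ hμ_empty hg hgσ, mul_sum, mul_sum, ← sum_add_distrib]
  exact sum_congr rfl fun k _ => by ring

/-- the Choquet integral is additive (and positively homogeneous)
on comonotonic functions. -/
theorem choquetIntegral_comonotone_additive {n : ℕ}
    (μ : Finset (Fin n) → ℝ) (hμ_empty : μ ∅ = 0)
    (hμ_mono : ∀ A B : Finset (Fin n), A ⊆ B → μ A ≤ μ B)
    (f g : Fin n → ℝ) (hf : ∀ i, 0 ≤ f i) (hg : ∀ i, 0 ≤ g i)
    (hcomon : ∀ i j, 0 ≤ (f i - f j) * (g i - g j))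
    (a b : ℝ) (ha : 0 ≤ a) (hb : 0 ≤ b) :
    choquetIntegral μ (fun i => a * f i + b * g i) =
      a * choquetIntegral μ f + b * choquetIntegral μ g :=
  choquetIntegral_comonotone_additive_general μ hμ_empty f g hf hg hcomon a b ha hb
end

section
/- Let Ω = {1,...,n}, let μ be a capacity on Ω, let f : Ω → [0,∞), and let τ be a ranking permutation of f. Define the Möbius transform of μ by 𝔡(A) = ∑_{B ⊆ A} (−1)^{|A|−|B|} μ(B) for A ⊆ Ω. Then the Choquet integral satisfies ∑_{i=1}^{n} f(τ(i))·(μ({τ(i),...,τ(n)}) − μ({τ(i+1),...,τ(n)})) = ∑_{∅ ≠ A ⊆ Ω} 𝔡(A) · min_{i ∈ A} f(i). -/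
/-! Möbius inversion gives `μ C = ∑_{A ⊆ C} 𝔡(A)`. Writing `T_i = {τ(i), …, τ(n)}` and
`S_i = T_i \ {τ(i)}`, the difference `μ(T_i) − μ(S_i)` is the sum of `𝔡(A)` over the `A ⊆ T_i`
containing `τ(i)`, and on each such `A` the minimum of `f` is `f(τ(i))` because `f ∘ τ` is monotone.
So the `i`-th Choquet term is `G(T_i) − G(S_i)` with `G(C) = ∑_{A ⊆ C} 𝔡(A) · min_A f`, and the sum
telescopes along the chain `Ω = T_1 ⊇ T_2 ⊇ ⋯ ⊇ ∅` to `G(Ω) − G(∅)`. -/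

/-- The set `{τ(i), τ(i+1), ..., τ(n)}`. -/
def tailSet {n : ℕ} (τ : Equiv.Perm (Fin n)) (i : Fin n) : Finset (Fin n) :=
  (Finset.univ.filter fun j : Fin n => i ≤ j).image τ

/-- The set `{τ(i+1), ..., τ(n)}` (empty when `i = n`). -/
def strictTailSet {n : ℕ} (τ : Equiv.Perm (Fin n)) (i : Fin n) : Finset (Fin n) :=
  (Finset.univ.filter fun j : Fin n => i < j).image τ

/-- The Möbius transform of a capacity:
`𝔡(A) = ∑_{B ⊆ A} (−1)^{|A|−|B|} μ(B)`. -/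
def mobius {n : ℕ} (μ : Finset (Fin n) → ℝ) (A : Finset (Fin n)) : ℝ :=
  ∑ B ∈ A.powerset, (-1 : ℝ) ^ (A.card - B.card) * μ B

open Finset

lemma sum_Icc_neg_one_pow_card_sub {α R : Type*} [DecidableEq α] [CommRing R]
    {B C : Finset α} (h : B ⊆ C) :
    ∑ A ∈ Icc B C, (-1 : R) ^ (#A - #B) = if B = C then 1 else 0 := by
  have hdisj : ∀ D ∈ (C \ B).powerset, Disjoint B D := fun D hD =>
    disjoint_of_subset_right (mem_powerset.1 hD) disjoint_sdiff
  rw [Icc_eq_image_powerset h, sum_image fun D hD E hE hDE => by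
    rw [← union_sdiff_cancel_left (hdisj D hD), hDE, union_sdiff_cancel_left (hdisj E hE)]]
  calc ∑ D ∈ (C \ B).powerset, (-1 : R) ^ (#(B ∪ D) - #B)
      = ∑ D ∈ (C \ B).powerset, (-1 : R) ^ #D := sum_congr rfl fun D hD => by
        rw [card_union_of_disjoint (hdisj D hD), Nat.add_sub_cancel_left]
    _ = if B = C then 1 else 0 := by
        have := congrArg (Int.cast : ℤ → R) (sum_powerset_neg_one_pow_card (x := C \ B))
        push_cast at this
        rw [this]
        exact if_congr (sdiff_eq_empty_iff_subset.trans ⟨h.antisymm, fun hBC => hBC ▸ subset_rfl⟩)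
          rfl rfl

lemma sum_powerset_mobius {n : ℕ} (μ : Finset (Fin n) → ℝ) (C : Finset (Fin n)) :
    ∑ A ∈ C.powerset, mobius μ A = μ C := by
  unfold mobius
  rw [sum_comm' (t' := C.powerset) (s' := fun B => Icc B C) (fun A B => by
    simp only [mem_powerset, mem_Icc]; constructor
    · rintro ⟨hA, hB⟩; exact ⟨⟨hB, hA⟩, hB.trans hA⟩
    · rintro ⟨⟨hB, hA⟩, -⟩; exact ⟨hA, hB⟩)]
  simp_rw [← sum_mul]
  rw [sum_eq_single_of_mem C (mem_powerset_self C) fun B hB hBC => ?_]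
  · simp
  · rw [sum_Icc_neg_one_pow_card_sub (mem_powerset.1 hB), if_neg hBC, zero_mul]

lemma sum_powerset_insert_sub {α M : Type*} [DecidableEq α] [AddCommGroup M] {a : α}
    {s : Finset α} (ha : a ∉ s) (g : Finset α → M) :
    ∑ A ∈ (insert a s).powerset, g A - ∑ A ∈ s.powerset, g A =
      ∑ B ∈ s.powerset, g (insert a B) := by
  rw [sum_powerset_insert ha, add_sub_cancel_left]

lemma mem_strictTailSet_iff {n : ℕ} (τ : Equiv.Perm (Fin n)) (i a : Fin n) :
    a ∈ strictTailSet τ i ↔ i < τ.symm a := by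
  simp [strictTailSet, ← Equiv.eq_symm_apply]

lemma self_notMem_strictTailSet {n : ℕ} (τ : Equiv.Perm (Fin n)) (i : Fin n) :
    τ i ∉ strictTailSet τ i := by
  simp [mem_strictTailSet_iff]

lemma tailSet_eq_insert {n : ℕ} (τ : Equiv.Perm (Fin n)) (i : Fin n) :
    tailSet τ i = insert (τ i) (strictTailSet τ i) := by
  rw [tailSet, strictTailSet, ← image_insert]
  congr 1
  ext j
  simp [le_iff_eq_or_lt, eq_comm]

lemma sum_tailSet_sub_strictTailSet {n : ℕ} {M : Type*} [AddCommGroup M]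
    (τ : Equiv.Perm (Fin n)) (G : Finset (Fin n) → M) :
    ∑ i, (G (tailSet τ i) - G (strictTailSet τ i)) = G univ - G ∅ := by
  set T : ℕ → Finset (Fin n) := fun k => (univ.filter fun j : Fin n => k ≤ (j : ℕ)).image τ
  -- Definitionally, `tailSet τ i = T i` and `strictTailSet τ i = T (i + 1)`.
  have hTn : T n = ∅ := by simp [T, filter_false_of_mem fun (j : Fin n) _ => not_le.2 j.isLt]
  calc ∑ i, (G (tailSet τ i) - G (strictTailSet τ i))
      = ∑ k ∈ range n, (G (T k) - G (T (k + 1))) :=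
        Fin.sum_univ_eq_sum_range (fun k => G (T k) - G (T (k + 1))) n
    _ = G (T 0) - G (T n) := sum_range_sub' _ _
    _ = G univ - G ∅ := by simp [T, hTn]

lemma csInf_image_insert_of_subset_strictTailSet {n : ℕ} {β : Type*}
    [ConditionallyCompleteLattice β] {f : Fin n → β} {τ : Equiv.Perm (Fin n)}
    (hτ : Monotone fun i => f (τ i)) {i : Fin n} {B : Finset (Fin n)}
    (hB : B ⊆ strictTailSet τ i) :
    sInf (f '' ↑(insert (τ i) B)) = f (τ i) := by
  refine IsLeast.csInf_eq ⟨⟨τ i, by simp, rfl⟩, ?_⟩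
  rintro _ ⟨a, ha, rfl⟩
  rcases mem_insert.1 ha with rfl | ha
  · exact le_rfl
  · simpa using hτ ((mem_strictTailSet_iff τ i a).1 (hB ha)).le

theorem choquet_sum_eq_mobius_sum_general {n : ℕ}
    (μ : Finset (Fin n) → ℝ)
    (f : Fin n → ℝ)
    (τ : Equiv.Perm (Fin n)) (hτ : Monotone fun i => f (τ i)) :
    ∑ i : Fin n, f (τ i) * (μ (tailSet τ i) - μ (strictTailSet τ i)) =
      ∑ A ∈ Finset.univ.powerset.filter (fun A : Finset (Fin n) => A.Nonempty),
        mobius μ A * sInf (f '' ↑A) := by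
  set F : Finset (Fin n) → ℝ := fun A => mobius μ A * sInf (f '' ↑A)
  have hterm : ∀ i, f (τ i) * (μ (tailSet τ i) - μ (strictTailSet τ i)) =
      ∑ A ∈ (tailSet τ i).powerset, F A - ∑ A ∈ (strictTailSet τ i).powerset, F A := by
    intro i
    have hi := self_notMem_strictTailSet τ i
    rw [← sum_powerset_mobius μ (tailSet τ i), ← sum_powerset_mobius μ (strictTailSet τ i),
      tailSet_eq_insert, sum_powerset_insert_sub hi, sum_powerset_insert_sub hi, mul_sum]
    refine sum_congr rfl fun B hB => ?_
    dsimp only [F]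
    rw [csInf_image_insert_of_subset_strictTailSet hτ (mem_powerset.1 hB), mul_comm]
  rw [sum_congr rfl fun i _ => hterm i,
    sum_tailSet_sub_strictTailSet τ fun C => ∑ A ∈ C.powerset, F A, powerset_empty, sum_singleton,
    ← sum_erase_eq_sub (empty_mem_powerset _)]
  congr 1
  ext A
  simp [nonempty_iff_ne_empty]

/-- the Choquet sum for a ranking permutation `τ` of `f` equals
`∑_{∅ ≠ A ⊆ Ω} 𝔡(A) · min_{i ∈ A} f(i)` (the minimum being expressed as `sInf (f '' A)`). -/
theorem choquet_sum_eq_mobius_sum {n : ℕ}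
    (μ : Finset (Fin n) → ℝ) (hμ_empty : μ ∅ = 0)
    (hμ_mono : ∀ A B : Finset (Fin n), A ⊆ B → μ A ≤ μ B)
    (f : Fin n → ℝ) (hf : ∀ i, 0 ≤ f i)
    (τ : Equiv.Perm (Fin n)) (hτ : Monotone fun i => f (τ i)) :
    ∑ i : Fin n, f (τ i) * (μ (tailSet τ i) - μ (strictTailSet τ i)) =
      ∑ A ∈ Finset.univ.powerset.filter (fun A : Finset (Fin n) => A.Nonempty),
        mobius μ A * sInf (f '' ↑A) :=
  choquet_sum_eq_mobius_sum_general μ f τ hτ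
end

section
/- Let u and v be nonzero vectors in a finite-dimensional complex inner product space, let P_u and P_v be the orthogonal projections onto the spans of u and v respectively, and let P be the orthogonal projection onto span{u, v}. Then the commutator satisfies P_u P_v − P_v P_u = (P − P_u − P_v)(P_u − P_v). -/
/-! Two idempotents `p`, `q` admitting a common left unit `e` (for projections: the projection
onto a subspace containing both ranges) satisfy `[p, q] = (e - p - q) (p - q)`; expanding the
right-hand side, `e p = p`, `e q = q`, `p² = p` and `q² = q` cancel everything but `p q - q p`. -/

/-- The orthogonal projection onto a subspace `K`, as an operator on the ambient space. -/
noncomputable def projOp {V : Type*} [NormedAddCommGroup V] [InnerProductSpace ℂ V]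
    [FiniteDimensional ℂ V] (K : Submodule ℂ V) : V →ₗ[ℂ] V :=
  K.subtype ∘ₗ (K.orthogonalProjectionOnto).toLinearMap

theorem IsIdempotentElem.mul_sub_mul_eq_of_mul_eq {R : Type*} [Ring R] {e p q : R}
    (hp : IsIdempotentElem p) (hq : IsIdempotentElem q) (hep : e * p = p) (heq : e * q = q) :
    p * q - q * p = (e - p - q) * (p - q) := by
  simp only [sub_mul, mul_sub, hep, heq, hp.eq, hq.eq]
  abel

section projOp

variable {V : Type*} [NormedAddCommGroup V] [InnerProductSpace ℂ V] [FiniteDimensional ℂ V]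

theorem projOp_eq_starProjection (K : Submodule ℂ V) : projOp K = K.starProjection :=
  rfl

theorem isIdempotentElem_projOp (K : Submodule ℂ V) : IsIdempotentElem (projOp K) := by
  rw [projOp_eq_starProjection, ContinuousLinearMap.isIdempotentElem_toLinearMap_iff]
  exact K.isIdempotentElem_starProjection

theorem projOp_comp_of_le {K L : Submodule ℂ V} (h : L ≤ K) :
    projOp K ∘ₗ projOp L = projOp L := by
  ext x
  exact K.starProjection_eq_self_iff.mpr (h (L.starProjection_apply_mem x))

end projOp

theorem commutator_eq_mobius_mul_general {V : Type*} [NormedAddCommGroup V]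
    [InnerProductSpace ℂ V] [FiniteDimensional ℂ V]
    (u v : V) :
    projOp (ℂ ∙ u) ∘ₗ projOp (ℂ ∙ v) - projOp (ℂ ∙ v) ∘ₗ projOp (ℂ ∙ u) =
      (projOp (Submodule.span ℂ {u, v}) - projOp (ℂ ∙ u) - projOp (ℂ ∙ v)) ∘ₗ
        (projOp (ℂ ∙ u) - projOp (ℂ ∙ v)) :=
  (isIdempotentElem_projOp _).mul_sub_mul_eq_of_mul_eq (isIdempotentElem_projOp _)
    (projOp_comp_of_le (Submodule.span_mono (by simp)))
    (projOp_comp_of_le (Submodule.span_mono (by simp)))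

/-- for nonzero vectors `u, v`, with `P_u, P_v` the projections
onto their spans and `P` the projection onto `span {u, v}`, the commutator
satisfies `P_u P_v − P_v P_u = (P − P_u − P_v)(P_u − P_v)`. -/
theorem commutator_eq_mobius_mul {V : Type*} [NormedAddCommGroup V]
    [InnerProductSpace ℂ V] [FiniteDimensional ℂ V]
    (u v : V) (hu : u ≠ 0) (hv : v ≠ 0) :
    projOp (ℂ ∙ u) ∘ₗ projOp (ℂ ∙ v) - projOp (ℂ ∙ v) ∘ₗ projOp (ℂ ∙ u) =
      (projOp (Submodule.span ℂ {u, v}) - projOp (ℂ ∙ u) - projOp (ℂ ∙ v)) ∘ₗ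
        (projOp (ℂ ∙ u) - projOp (ℂ ∙ v)) :=
  commutator_eq_mobius_mul_general u v
end
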